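/- A random-unitary qubit channel M(ρ) = Σᵢ pᵢ Uᵢ ρ Uᵢ†, with all pᵢ > 0 and Uᵢ unitary on ℂ², is ergodic if and only if there exist indices i, j with Uᵢ Uⱼ ≠ Uⱼ Uᵢ. -/

import Mathlib

open Matrix
open scoped ComplexOrder

noncomputable section

abbrev Mat (d : ℕ) := Matrix (Fin d) (Fin d) ℂ

/-- `K` is a Kraus representation of the linear map `Φ`. -/
def IsKrausRep {d : ℕ} (Φ : Mat d →ₗ[ℂ] Mat d) {n : ℕ} (K : Fin n → Mat d) : Prop :=
  (∀ A, Φ A = ∑ i, K i * A * (K i)ᴴ) ∧ ∑ i, (K i)ᴴ * K i = 1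

/-- A quantum channel: completely positive trace-preserving map, i.e. admitting a Kraus
representation with the normalization condition. -/
def IsCPTP {d : ℕ} (Φ : Mat d →ₗ[ℂ] Mat d) : Prop :=
  ∃ (n : ℕ) (K : Fin n → Mat d), IsKrausRep Φ K

/-- A density matrix: positive semidefinite with unit trace. -/
def IsDensity {d : ℕ} (ρ : Mat d) : Prop := ρ.PosSemidef ∧ ρ.trace = 1

/-- Ergodicity: the channel has a unique fixed point density matrix. -/
def IsErgodic {d : ℕ} (Φ : Mat d →ₗ[ℂ] Mat d) : Prop :=
  ∃! ρ : Mat d, IsDensity ρ ∧ Φ ρ = ρ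

/-- The support of an operator, viewed as a subspace of `ℂ^d`. -/
def supp {d : ℕ} (ρ : Mat d) : Submodule ℂ (Fin d → ℂ) := LinearMap.range ρ.mulVecLin

/-- The positive semidefinite square root (as `Matrix.PosSemidef.sqrt` was defined in Mathlib, Dec 2024). -/
def Matrix.PosSemidef.sqrt {n : Type*} [Fintype n] [DecidableEq n] {A : Matrix n n ℂ}
    (hA : A.PosSemidef) : Matrix n n ℂ :=
  (hA.1.eigenvectorUnitary : Matrix n n ℂ) *
    diagonal (fun i => ((√(hA.1.eigenvalues i) : ℝ) : ℂ)) *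
    (star hA.1.eigenvectorUnitary : Matrix n n ℂ)

/-- The trace norm `‖A‖₁ = Tr √(A†A)`. -/
def traceNorm {d : ℕ} (A : Mat d) : ℝ :=
  ((Matrix.posSemidef_conjTranspose_mul_self A).sqrt.trace).re

/-- Mixing: iterates of the channel converge in trace norm to a unique state. -/
def IsMixing {d : ℕ} (Φ : Mat d →ₗ[ℂ] Mat d) : Prop :=
  ∃ ρs : Mat d, IsDensity ρs ∧ ∀ ρ : Mat d, IsDensity ρ →
    Filter.Tendsto (fun k : ℕ => traceNorm ((Φ ^ k) ρ - ρs)) Filter.atTop (nhds 0)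

/-- A subspace `S` is invariant for a channel if every Kraus operator (of any Kraus
representation) maps `S` into itself. -/
def IsInvariantSubspace {d : ℕ} (Φ : Mat d →ₗ[ℂ] Mat d) (S : Submodule ℂ (Fin d → ℂ)) : Prop :=
  ∀ (n : ℕ) (K : Fin n → Mat d), IsKrausRep Φ K → ∀ i, ∀ x ∈ S, (K i).mulVec x ∈ S

/-!
A Hermitian fixed point ρ of ρ ↦ ∑ pᵢ Uᵢ ρ Uᵢ† commutes with every Uᵢ, because
∑ pᵢ ‖Uᵢ ρ Uᵢ† - ρ‖₂² = 2 tr ρ² - 2 tr (ρ Φ(ρ)) = 0; conversely everything commuting with all Uᵢ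
is fixed. On ℂ² the commutant of a non-scalar matrix W is span {1, W}, hence commutative.

So if two Uᵢ do not commute, every fixed state is scalar, i.e. equal to 1/2. If all Uᵢ commute,
some nonzero traceless τ commutes with all of them (the traceless part of a non-scalar Uᵢ), and the
normalised states |1 + sτ|² are all fixed; ρ_s = ρ_{-s} would force sτ + s̄τ† = 0, which for
s ∈ {1, i} gives τ = 0.
-/

namespace Matrix

variable {K : Type*} [Field K]

theorem exists_eq_smul_one_add_smul_of_commute {W A : Matrix (Fin 2) (Fin 2) K}
    (hW : ∀ c : K, W ≠ c • 1) (hA : Commute A W) : ∃ α β : K, A = α • 1 + β • W := by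
  have e00 := congrFun (congrFun hA.eq 0) 0
  have e01 := congrFun (congrFun hA.eq 0) 1
  have e10 := congrFun (congrFun hA.eq 1) 0
  simp only [mul_apply, Fin.sum_univ_two] at e00 e01 e10
  suffices ∃ β, A 0 1 = β * W 0 1 ∧ A 1 0 = β * W 1 0 ∧ A 0 0 - A 1 1 = β * (W 0 0 - W 1 1) by
    obtain ⟨β, h01, h10, hdiag⟩ := this
    refine ⟨A 1 1 - β * W 1 1, β, ?_⟩
    ext i j
    fin_cases i <;> fin_cases j <;> simp [h01, h10]
    linear_combination hdiag
  have hne : W 0 0 - W 1 1 ≠ 0 ∨ W 0 1 ≠ 0 ∨ W 1 0 ≠ 0 := by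
    by_contra! h
    apply hW (W 1 1)
    ext i j
    fin_cases i <;> fin_cases j <;> simp [h.2.1, h.2.2, sub_eq_zero.mp h.1]
  rcases hne with h | h | h
  · refine ⟨(A 0 0 - A 1 1) / (W 0 0 - W 1 1), ?_, ?_, ?_⟩ <;> field_simp
    · linear_combination -e01
    · linear_combination e10
  · refine ⟨A 0 1 / W 0 1, ?_, ?_, ?_⟩ <;> field_simp
    · linear_combination -e00
    · linear_combination e01
  · refine ⟨A 1 0 / W 1 0, ?_, ?_, ?_⟩ <;> field_simp
    · linear_combination e00
    · linear_combination -e10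

theorem commute_of_commute_of_forall_ne_smul_one {W A B : Matrix (Fin 2) (Fin 2) K}
    (hW : ∀ c : K, W ≠ c • 1) (hA : Commute A W) (hB : Commute B W) : Commute A B := by
  obtain ⟨α, β, rfl⟩ := exists_eq_smul_one_add_smul_of_commute hW hA
  exact ((Commute.one_left B).smul_left α).add_left (hB.symm.smul_left β)

theorem exists_ne_zero_trace_eq_zero_forall_commute [NeZero (2 : K)] {ι : Type*}
    {U : ι → Matrix (Fin 2) (Fin 2) K} (hU : ∀ i j, Commute (U i) (U j)) :
    ∃ τ : Matrix (Fin 2) (Fin 2) K, τ ≠ 0 ∧ τ.trace = 0 ∧ ∀ i, Commute (U i) τ := by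
  by_cases hscalar : ∀ i, ∃ c : K, U i = c • 1
  · refine ⟨!![1, 0; 0, -1], fun h => by simpa using congrFun (congrFun h 0) 0,
      by simp [trace_fin_two], fun i => ?_⟩
    obtain ⟨c, hc⟩ := hscalar i
    exact hc ▸ (Commute.one_left _).smul_left c
  · push Not at hscalar
    obtain ⟨i₀, hW⟩ := hscalar
    refine ⟨U i₀ - ((U i₀).trace / 2) • 1, sub_ne_zero.mpr (hW _), ?_, fun i =>
      (hU i i₀).sub_right ((Commute.one_right _).smul_right _)⟩
    simp [trace_fin_two, div_mul_cancel₀ _ (NeZero.ne (2 : K))]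

end Matrix

theorem Commute.star_right_of_mem_unitary {R : Type*} [Monoid R] [StarMul R] {u x : R}
    (hu : u ∈ unitary R) (h : Commute u x) : Commute u (star x) := by
  rw [commute_unitary_iff_star_right_conjugate hu] at h ⊢
  simpa [mul_assoc] using congrArg star h

theorem not_isErgodic_of_fixed {d : ℕ} {Φ : Mat d →ₗ[ℂ] Mat d} {τ : Mat d} (hτ0 : τ ≠ 0)
    (htr : τ.trace = 0)
    (hfix : ∀ s : ℂ, Φ ((1 + s • τ)ᴴ * (1 + s • τ)) = (1 + s • τ)ᴴ * (1 + s • τ)) :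
    ¬ IsErgodic Φ := by
  set A : ℂ → Mat d := fun s => (1 + s • τ)ᴴ * (1 + s • τ)
  have hsub : ∀ s, A s - A (-s) = (2 : ℂ) • (s • τ + star s • τᴴ) := by
    intro s
    simp only [A, conjTranspose_add, conjTranspose_one, conjTranspose_smul, star_neg,
      Matrix.add_mul, Matrix.mul_add, Matrix.one_mul, Matrix.mul_one, Matrix.smul_mul,
      Matrix.mul_smul, neg_smul, smul_neg, neg_neg, smul_add, two_smul]
    abel
  have htrA : ∀ s, (A (-s)).trace = (A s).trace := fun s => by
    rw [← sub_eq_zero, ← neg_sub, ← trace_sub, hsub, trace_smul, trace_add, trace_smul, trace_smul,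
      trace_conjTranspose, htr]
    simp
  have hA0 : ∀ s, (A s).trace ≠ 0 := by
    intro s h
    rw [(posSemidef_conjTranspose_mul_self _).trace_eq_zero_iff,
      conjTranspose_mul_self_eq_zero] at h
    have hd := congrArg trace h
    rw [trace_add, trace_smul, htr, trace_one, trace_zero] at hd
    have : d = 0 := by simpa using hd
    subst this
    exact hτ0 (Subsingleton.elim _ _)
  have hstate : ∀ s,
      IsDensity ((A s).trace⁻¹ • A s) ∧ Φ ((A s).trace⁻¹ • A s) = (A s).trace⁻¹ • A s := fun s =>
    ⟨⟨(posSemidef_conjTranspose_mul_self _).smul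
      (inv_nonneg_of_nonneg (posSemidef_conjTranspose_mul_self _).trace_nonneg),
      by rw [trace_smul, smul_eq_mul, inv_mul_cancel₀ (hA0 s)]⟩, by rw [map_smul, hfix]⟩
  rintro ⟨ρ, -, huniq⟩
  have hskew : ∀ s : ℂ, s • τ + star s • τᴴ = 0 := by
    intro s
    have h := (huniq _ (hstate s)).trans (huniq _ (hstate (-s))).symm
    rw [htrA, smul_right_injective _ (inv_ne_zero (hA0 s)) |>.eq_iff, ← sub_eq_zero, hsub] at h
    exact (smul_eq_zero.mp h).resolve_left two_ne_zero
  have h1 := hskew 1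
  have hI := hskew Complex.I
  simp only [one_smul, star_one, Complex.star_def, Complex.conj_I, neg_smul] at h1 hI
  apply hτ0
  have : (2 * Complex.I) • τ = 0 := by
    linear_combination (norm := module) Complex.I • h1 + hI
  exact (smul_eq_zero.mp this).resolve_left (by simp)

section RandomUnitary

variable {d m : ℕ} {p : Fin m → ℝ} {U : Fin m → Mat d}

theorem sum_conj_eq_self_of_commute (hsum : ∑ i, p i = 1)
    (hU : ∀ i, U i ∈ unitaryGroup (Fin d) ℂ) {X : Mat d} (hX : ∀ i, Commute (U i) X) :
    ∑ i, (p i : ℂ) • (U i * X * (U i)ᴴ) = X := by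
  simp_rw [← star_eq_conjTranspose, (commute_unitary_iff_star_right_conjugate (hU _)).mp (hX _),
    ← Finset.sum_smul, ← Complex.ofReal_sum, hsum, Complex.ofReal_one, one_smul]

theorem trace_conjTranspose_mul_self_conj_sub {V ρ : Mat d} (hV : V ∈ unitaryGroup (Fin d) ℂ)
    (hρ : ρ.IsHermitian) :
    ((V * ρ * Vᴴ - ρ)ᴴ * (V * ρ * Vᴴ - ρ)).trace =
      2 * (ρ * ρ).trace - 2 * (ρ * (V * ρ * Vᴴ)).trace := by
  have hVV : Vᴴ * V = 1 := mem_unitaryGroup_iff'.mp hV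
  have hsq : (V * ρ * Vᴴ * (V * ρ * Vᴴ)).trace = (ρ * ρ).trace := by
    rw [show V * ρ * Vᴴ * (V * ρ * Vᴴ) = V * (ρ * ρ) * Vᴴ by
      simp only [Matrix.mul_assoc, ← Matrix.mul_assoc Vᴴ V, hVV, Matrix.one_mul],
      trace_mul_cycle, ← Matrix.mul_assoc, hVV, Matrix.one_mul]
  have hA : (V * ρ * Vᴴ)ᴴ = V * ρ * Vᴴ := by
    rw [conjTranspose_mul, conjTranspose_mul, conjTranspose_conjTranspose, hρ.eq, Matrix.mul_assoc]
  rw [conjTranspose_sub, hA, hρ.eq, Matrix.sub_mul, Matrix.mul_sub, Matrix.mul_sub, trace_sub,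
    trace_sub, trace_sub, hsq, trace_mul_comm (V * ρ * Vᴴ) ρ]
  ring

theorem commute_of_sum_conj_eq_self (hp : ∀ i, 0 < p i) (hsum : ∑ i, p i = 1)
    (hU : ∀ i, U i ∈ unitaryGroup (Fin d) ℂ) {ρ : Mat d} (hρ : ρ.IsHermitian)
    (hfix : ∑ i, (p i : ℂ) • (U i * ρ * (U i)ᴴ) = ρ) (i : Fin m) : Commute (U i) ρ := by
  set D : Fin m → Mat d := fun i => U i * ρ * (U i)ᴴ - ρ
  have htotal : ∑ i, (p i : ℂ) * ((D i)ᴴ * D i).trace = 0 := by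
    calc ∑ i, (p i : ℂ) * ((D i)ᴴ * D i).trace
        = ∑ i, ((p i : ℂ) * (2 * (ρ * ρ).trace)
            - 2 * (ρ * ((p i : ℂ) • (U i * ρ * (U i)ᴴ))).trace) :=
          Finset.sum_congr rfl fun i _ => by
            rw [trace_conjTranspose_mul_self_conj_sub (hU i) hρ, Matrix.mul_smul, trace_smul,
              smul_eq_mul]
            ring
      _ = (∑ i, (p i : ℂ)) * (2 * (ρ * ρ).trace)
          - 2 * (ρ * ∑ i, (p i : ℂ) • (U i * ρ * (U i)ᴴ)).trace := by
          rw [Finset.sum_sub_distrib, ← Finset.sum_mul, ← Finset.mul_sum, Matrix.mul_sum, trace_sum]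
      _ = 0 := by rw [hfix, ← Complex.ofReal_sum, hsum, Complex.ofReal_one]; ring
  have hterm := (Finset.sum_eq_zero_iff_of_nonneg fun i _ => mul_nonneg
    (Complex.zero_le_real.mpr (hp i).le) (posSemidef_conjTranspose_mul_self (D i)).trace_nonneg).mp
    htotal i (Finset.mem_univ i)
  have hD : D i = 0 := by
    rw [mul_eq_zero, Complex.ofReal_eq_zero,
      (posSemidef_conjTranspose_mul_self _).trace_eq_zero_iff,
      conjTranspose_mul_self_eq_zero] at hterm
    exact hterm.resolve_left (hp i).ne'
  exact (commute_unitary_iff_star_right_conjugate (hU i)).mpr (sub_eq_zero.mp hD)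

theorem not_isErgodic_of_commute (hsum : ∑ i, p i = 1) (hU : ∀ i, U i ∈ unitaryGroup (Fin d) ℂ)
    {Φ : Mat d →ₗ[ℂ] Mat d} (hΦ : ∀ A : Mat d, Φ A = ∑ i, (p i : ℂ) • (U i * A * (U i)ᴴ))
    {τ : Mat d} (hτ0 : τ ≠ 0) (htr : τ.trace = 0) (hτ : ∀ i, Commute (U i) τ) : ¬ IsErgodic Φ :=
  not_isErgodic_of_fixed hτ0 htr fun s => by
    have h : ∀ i, Commute (U i) (1 + s • τ) := fun i =>
      (Commute.one_right _).add_right ((hτ i).smul_right s)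
    rw [hΦ]
    exact sum_conj_eq_self_of_commute hsum hU fun i =>
      ((h i).star_right_of_mem_unitary (hU i)).mul_right (h i)

end RandomUnitary

/-- A random-unitary qubit channel is ergodic if and only if at least two of the unitaries do
not commute. -/
theorem randomUnitary_qubit_ergodic_iff {m : ℕ} (p : Fin m → ℝ) (U : Fin m → Mat 2)
    (hp : ∀ i, 0 < p i) (hsum : ∑ i, p i = 1)
    (hU : ∀ i, U i ∈ Matrix.unitaryGroup (Fin 2) ℂ)
    (Φ : Mat 2 →ₗ[ℂ] Mat 2)
    (hΦ : ∀ A : Mat 2, Φ A = ∑ i, (p i : ℂ) • (U i * A * (U i)ᴴ)) :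
    IsErgodic Φ ↔ ∃ i j, U i * U j ≠ U j * U i := by
  constructor
  · intro hE
    by_contra! hcomm
    obtain ⟨τ, hτ0, htr, hτ⟩ := exists_ne_zero_trace_eq_zero_forall_commute hcomm
    exact not_isErgodic_of_commute hsum hU hΦ hτ0 htr hτ hE
  · rintro ⟨i, j, hij⟩
    refine ⟨(2⁻¹ : ℂ) • 1, ⟨⟨PosSemidef.one.smul (by positivity), by simp⟩, ?_⟩, ?_⟩
    · rw [hΦ]
      exact sum_conj_eq_self_of_commute hsum hU fun k => (Commute.one_right _).smul_right _
    · rintro ρ ⟨⟨hρ, htr⟩, hfix⟩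
      have hcomm := commute_of_sum_conj_eq_self hp hsum hU hρ.1 ((hΦ ρ).symm.trans hfix)
      obtain ⟨c, rfl⟩ : ∃ c : ℂ, ρ = c • 1 := by
        by_contra! hρ
        exact hij (commute_of_commute_of_forall_ne_smul_one hρ (hcomm i) (hcomm j)).eq
      rw [trace_smul, trace_one, Fintype.card_fin, smul_eq_mul] at htr
      rw [eq_inv_of_mul_eq_one_left (a := c) (b := 2) (by exact_mod_cast htr)]
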